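/- arXiv:math/0610852 — 2 statements merged into one kernel-verified Lean document; each statement's English description precedes it below -/
import Mathlib

section
/- For a continuous cdf F of a positive random variable Y with finite positive mean μ, the Lorenz curve satisfies L(u) = μ⁻¹ E[Y · 1{Y ≤ F⁻¹(u)}] for all u ∈ (0,1). -/
/-!
Inverse transform sampling: for a probability measure `ν` on `ℝ` with cdf `F`, the quantile
function is related to `F` by the Galois connection `F⁻¹(s) ≤ y ↔ s ≤ F y` (`0 < s < 1`), so
Lebesgue measure on `(0, 1)` pushed forward by `F⁻¹` is `ν`. When `F` is continuous,
`F⁻¹(s) ≤ F⁻¹(u) ↔ s ≤ u`, hence `{y ≤ F⁻¹(u)}` pulls back to `(0, u]`, and the change of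
variables formula turns `∫_{y ≤ F⁻¹(u)} y dν` into `∫₀ᵘ F⁻¹(s) ds`.
-/

open MeasureTheory Set

noncomputable def quant (F : ℝ → ℝ) (u : ℝ) : ℝ := sInf {y | u ≤ F y}

open Filter Topology

namespace ProbabilityTheory

theorem volume_Ioo_zero_one_inter_Iic {c : ℝ} (hc : c ≤ 1) :
    volume (Ioo 0 1 ∩ Iic c) = ENNReal.ofReal c := by
  refine le_antisymm ?_ ?_
  · calc volume (Ioo 0 1 ∩ Iic c) ≤ volume (Ioc 0 c) := measure_mono fun s hs => ⟨hs.1.1, hs.2⟩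
      _ = ENNReal.ofReal c := by rw [Real.volume_Ioc, sub_zero]
  · calc ENNReal.ofReal c = volume (Ioo 0 c) := by rw [Real.volume_Ioo, sub_zero]
      _ ≤ volume (Ioo 0 1 ∩ Iic c) :=
          measure_mono fun s hs => ⟨⟨hs.1, hs.2.trans_le hc⟩, hs.2.le⟩

variable (ν : Measure ℝ)

theorem quant_cdf_le_iff {s : ℝ} (hs : s ∈ Ioo 0 1) (y : ℝ) :
    quant (cdf ν) s ≤ y ↔ s ≤ cdf ν y := by
  set S := {y | s ≤ cdf ν y}
  have hne : S.Nonempty := ((tendsto_cdf_atTop ν).eventually (eventually_ge_nhds hs.2)).exists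
  have hbdd : BddBelow S := by
    obtain ⟨a, ha⟩ :=
      eventually_atBot.1 ((tendsto_cdf_atBot ν).eventually (eventually_lt_nhds hs.1))
    exact ⟨a, fun y hy => le_of_not_ge fun hya => (ha y hya).not_ge hy⟩
  -- Right-continuity of the cdf makes the infimum attained.
  have hmem : s ≤ cdf ν (quant (cdf ν) s) := by
    refine ge_of_tendsto (((cdf ν).right_continuous _).mono_left
      (nhdsWithin_mono _ Ioi_subset_Ici_self)) (eventually_nhdsWithin_of_forall fun y hy => ?_)
    obtain ⟨y', hy'S, hy'y⟩ := exists_lt_of_csInf_lt hne hy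
    exact hy'S.trans (monotone_cdf ν hy'y.le)
  exact ⟨fun h => hmem.trans (monotone_cdf ν h), fun h => csInf_le hbdd h⟩

theorem monotoneOn_quant_cdf : MonotoneOn (quant (cdf ν)) (Ioo 0 1) :=
  fun _ hs _ ht hst => (quant_cdf_le_iff ν hs _).2 (hst.trans ((quant_cdf_le_iff ν ht _).1 le_rfl))

theorem aemeasurable_quant_cdf : AEMeasurable (quant (cdf ν)) (volume.restrict (Ioo 0 1)) :=
  aemeasurable_restrict_of_monotoneOn measurableSet_Ioo (monotoneOn_quant_cdf ν)

theorem map_quant_cdf_volume_Ioo [IsProbabilityMeasure ν] :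
    (volume.restrict (Ioo 0 1)).map (quant (cdf ν)) = ν := by
  refine (Measure.ext_of_Iic ν _ fun y => ?_).symm
  have hpre : quant (cdf ν) ⁻¹' Iic y ∩ Ioo 0 1 = Ioo 0 1 ∩ Iic (cdf ν y) := by
    ext s
    simp only [mem_inter_iff, mem_preimage, mem_Iic]
    exact ⟨fun ⟨h, hs⟩ => ⟨hs, (quant_cdf_le_iff ν hs y).1 h⟩,
      fun ⟨hs, h⟩ => ⟨(quant_cdf_le_iff ν hs y).2 h, hs⟩⟩
  rw [Measure.map_apply_of_aemeasurable (aemeasurable_quant_cdf ν) measurableSet_Iic,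
    Measure.restrict_apply' measurableSet_Ioo, hpre,
    volume_Ioo_zero_one_inter_Iic (cdf_le_one ν y), ofReal_cdf]

variable {ν}

theorem cdf_quant_cdf (hc : Continuous (cdf ν)) {s : ℝ} (hs : s ∈ Ioo 0 1) :
    cdf ν (quant (cdf ν) s) = s := by
  refine le_antisymm ?_ ((quant_cdf_le_iff ν hs _).1 le_rfl)
  refine le_of_tendsto (x := 𝓝[<] quant (cdf ν) s) ((hc.tendsto _).mono_left nhdsWithin_le_nhds)
    (eventually_nhdsWithin_of_forall fun y hy => ?_)
  exact (lt_of_not_ge fun h => (not_le.2 hy) ((quant_cdf_le_iff ν hs y).2 h)).le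

theorem quant_cdf_le_quant_cdf_iff (hc : Continuous (cdf ν)) {s u : ℝ} (hs : s ∈ Ioo 0 1)
    (hu : u ∈ Ioo 0 1) : quant (cdf ν) s ≤ quant (cdf ν) u ↔ s ≤ u := by
  rw [quant_cdf_le_iff ν hs, cdf_quant_cdf hc hu]

theorem preimage_quant_cdf_Iic_inter_Ioo (hc : Continuous (cdf ν)) {u : ℝ} (hu : u ∈ Ioo 0 1) :
    quant (cdf ν) ⁻¹' Iic (quant (cdf ν) u) ∩ Ioo 0 1 = Ioc 0 u := by
  ext s
  simp only [mem_inter_iff, mem_preimage, mem_Iic, mem_Ioc]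
  constructor
  · rintro ⟨h, hs⟩
    exact ⟨hs.1, (quant_cdf_le_quant_cdf_iff hc hs hu).1 h⟩
  · rintro ⟨hs0, hsu⟩
    have hs : s ∈ Ioo 0 1 := ⟨hs0, hsu.trans_lt hu.2⟩
    exact ⟨(quant_cdf_le_quant_cdf_iff hc hs hu).2 hsu, hs⟩

theorem setIntegral_Iic_quant_cdf [IsProbabilityMeasure ν] (hc : Continuous (cdf ν))
    {E : Type*} [NormedAddCommGroup E] [NormedSpace ℝ E] {g : ℝ → E}
    (hg : AEStronglyMeasurable g ν) {u : ℝ} (hu : u ∈ Ioo 0 1) :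
    ∫ y in Iic (quant (cdf ν) u), g y ∂ν = ∫ s in Ioc 0 u, g (quant (cdf ν) s) := by
  have hmap := map_quant_cdf_volume_Ioo ν
  calc ∫ y in Iic (quant (cdf ν) u), g y ∂ν
      = ∫ y in Iic (quant (cdf ν) u), g y ∂(volume.restrict (Ioo 0 1)).map (quant (cdf ν)) := by
        rw [hmap]
    _ = ∫ s in Ioc 0 u, g (quant (cdf ν) s) := by
        rw [setIntegral_map measurableSet_Iic (by rwa [hmap]) (aemeasurable_quant_cdf ν),
          Measure.restrict_restrict' measurableSet_Ioo, preimage_quant_cdf_Iic_inter_Ioo hc hu]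

end ProbabilityTheory

theorem lorenz_truncated_mean_general {Ω : Type*} [MeasurableSpace Ω]
    (ℙ : Measure Ω) [IsProbabilityMeasure ℙ] (Y : Ω → ℝ) (hY : Measurable Y)
    (F : ℝ → ℝ) (hFc : Continuous F)
    (hcdf : ∀ y, (ℙ {ω | Y ω ≤ y}).toReal = F y)
    (μ : ℝ) :
    ∀ u ∈ Set.Ioo (0:ℝ) 1,
      μ⁻¹ * (∫ s in (0:ℝ)..u, quant F s)
        = μ⁻¹ * ∫ ω in {ω | Y ω ≤ quant F u}, Y ω ∂ℙ := by
  intro u hu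
  have := Measure.isProbabilityMeasure_map (μ := ℙ) hY.aemeasurable
  have hF : ⇑(ProbabilityTheory.cdf (ℙ.map Y)) = F := funext fun y => by
    rw [ProbabilityTheory.cdf_eq_real, map_measureReal_apply hY measurableSet_Iic, ← hcdf]; rfl
  subst hF
  congr 1
  rw [intervalIntegral.integral_of_le hu.1.le]
  exact (ProbabilityTheory.setIntegral_Iic_quant_cdf hFc aestronglyMeasurable_id hu).symm.trans
    (setIntegral_map measurableSet_Iic aestronglyMeasurable_id hY.aemeasurable)

theorem lorenz_truncated_mean {Ω : Type*} [MeasurableSpace Ω]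
    (ℙ : Measure Ω) [IsProbabilityMeasure ℙ] (Y : Ω → ℝ) (hY : Measurable Y)
    (hYpos : ∀ ω, 0 < Y ω) (hYint : Integrable Y ℙ)
    (F : ℝ → ℝ) (hFc : Continuous F) (hFmono : StrictMonoOn F (Set.Ioi 0))
    (hcdf : ∀ y, (ℙ {ω | Y ω ≤ y}).toReal = F y)
    (μ : ℝ) (hμdef : μ = ∫ ω, Y ω ∂ℙ) (hμpos : 0 < μ) :
    ∀ u ∈ Set.Ioo (0:ℝ) 1,
      μ⁻¹ * (∫ s in (0:ℝ)..u, quant F s)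
        = μ⁻¹ * ∫ ω in {ω | Y ω ≤ quant F u}, Y ω ∂ℙ :=
  lorenz_truncated_mean_general ℙ Y hY F hFc hcdf μ
end

section
/- Let F and H be continuous, strictly increasing distribution functions on (0,∞) with F(0) = H(0) = 0, and suppose X has distribution F and Z has distribution H. Then H⁻¹∘F is starshaped on {x : 0 < F(x) < 1} if and only if there exists a positive nondecreasing function q on {x : 0 < F(x) < 1} such that Z has the same distribution as q(X)·X. -/
open MeasureTheory Set

open Filter Topology

/-!
With `H⁻¹ = quant H`, `H⁻¹ ∘ F` is starshaped iff `x ↦ H⁻¹(F x) / x` is nondecreasing. Given that,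
`q x = H⁻¹(F x) / x` works: `q(X) X = H⁻¹(F X)` has law `H` because `F(X)` is uniform on `[0, 1]`.
Conversely, if `T x = q x * x` is nondecreasing on `{0 < F < 1}`, which carries `X` almost surely,
and `T(X)` has law `H`, then comparing the events `{X ≤ z}` and `{T(X) ≤ T z}` gives
`H (T z) = F z`, i.e. `T = H⁻¹ ∘ F`; so `H⁻¹(F x) / x = q x` is nondecreasing.
-/

lemma starshaped_iff_monotoneOn_div {g : ℝ → ℝ} {s : Set ℝ} (hs : s ⊆ Ioi 0) :
    (∀ x ∈ s, ∀ l ∈ Icc (0:ℝ) 1, l * x ∈ s → g (l * x) ≤ l * g x) ↔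
      MonotoneOn (fun x => g x / x) s := by
  constructor
  · intro hg a ha b hb hab
    have ha0 : 0 < a := hs ha
    have hb0 : 0 < b := hs hb
    have key := hg b hb (a / b) ⟨by positivity, (div_le_one hb0).2 hab⟩
      (by rwa [div_mul_cancel₀ _ hb0.ne'])
    rw [div_mul_cancel₀ _ hb0.ne'] at key
    rw [div_le_div_iff₀ ha0 hb0]
    calc g a * b ≤ a / b * g b * b := by gcongr
      _ = g b * a := by field_simp
  · intro hg x hx l hl hlx
    have hx0 : 0 < x := hs hx
    have hl0 : 0 < l := pos_of_mul_pos_left (hs hlx) hx0.le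
    have key := hg hlx hx (mul_le_of_le_one_left hx0.le hl.2)
    rw [div_le_div_iff₀ (mul_pos hl0 hx0) hx0] at key
    exact le_of_mul_le_mul_right (key.trans_eq (by ring)) hx0

lemma StrictMonoOn.lt_of_monotone_of_pos {f : ℝ → ℝ} (hs : StrictMonoOn f (Ioi 0))
    (hm : Monotone f) {a b : ℝ} (hb : 0 < b) (hab : a < b) : f a < f b :=
  (hm (le_max_left a (b / 2))).trans_lt <|
    hs (lt_max_of_lt_right (half_pos hb)) hb (max_lt hab (half_lt_self hb))

section Quantile

variable {H : ℝ → ℝ}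

lemma quant_le_iff (hc : Continuous H) (hm : Monotone H) {u : ℝ}
    (hbdd : BddBelow {y | u ≤ H y}) (hne : ∃ b, u ≤ H b) (y : ℝ) :
    quant H u ≤ y ↔ u ≤ H y :=
  have hmem : u ≤ H (quant H u) := (isClosed_le continuous_const hc).csInf_mem hne hbdd
  ⟨fun h => hmem.trans (hm h), fun h => csInf_le hbdd h⟩

lemma quant_apply_self (hs : StrictMonoOn H (Ioi 0)) (hm : Monotone H) {t : ℝ} (ht : 0 < t) :
    quant H (H t) = t :=
  IsLeast.csInf_eq ⟨le_refl (H t), fun _ hs' => not_lt.1 fun hlt =>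
    (hs.lt_of_monotone_of_pos hm ht hlt).not_ge hs'⟩

end Quantile

section Distribution

variable {Ω : Type*} [MeasurableSpace Ω] {ℙ : Measure Ω} {W : Ω → ℝ} {G : ℝ → ℝ}

lemma apply_eq_zero_of_nonpos (hWpos : ∀ ω, 0 < W ω)
    (hWG : ∀ x, (ℙ {ω | W ω ≤ x}).toReal = G x) {x : ℝ} (hx : x ≤ 0) : G x = 0 := by
  rw [← hWG x, show {ω | W ω ≤ x} = ∅ from
    eq_empty_of_forall_notMem fun ω hω => (hWpos ω).not_ge (le_trans hω hx)]
  simp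

lemma cdf_comp_eq_of_monotoneOn [IsFiniteMeasure ℙ] {F T : ℝ → ℝ} {S : Set ℝ}
    (hT : MonotoneOn T S) (hWS : ∀ᵐ ω ∂ℙ, W ω ∈ S) (hGc : Continuous G)
    (hWF : ∀ x, (ℙ {ω | W ω ≤ x}).toReal = F x)
    (hTG : ∀ y, (ℙ {ω | T (W ω) ≤ y}).toReal = G y) {z : ℝ} (hz : z ∈ S) :
    G (T z) = F z := by
  have hle : ∀ t < T z, G t ≤ F z := fun t ht => by
    rw [← hWF, ← hTG]
    refine ENNReal.toReal_mono (measure_ne_top _ _) (measure_mono_ae (hWS.mono fun ω hω h => ?_))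
    exact not_lt.1 fun hlt => ht.not_ge ((hT hz hω hlt.le).trans h)
  refine le_antisymm (le_of_tendsto (hGc.continuousAt.tendsto.mono_left nhdsWithin_le_nhds)
    (eventually_nhdsWithin_of_forall (s := Iio (T z)) hle)) ?_
  rw [← hWF, ← hTG]
  exact ENNReal.toReal_mono (measure_ne_top _ _)
    (measure_mono_ae (hWS.mono fun ω hω h => hT hω hz h))

variable [IsProbabilityMeasure ℙ]

lemma eq_cdf_map (hW : Measurable W)
    (hWG : ∀ x, (ℙ {ω | W ω ≤ x}).toReal = G x) :
    G = ProbabilityTheory.cdf (ℙ.map W) := by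
  have := Measure.isProbabilityMeasure_map (μ := ℙ) hW.aemeasurable
  ext x
  rw [ProbabilityTheory.cdf_eq_real, measureReal_def, Measure.map_apply hW measurableSet_Iic,
    ← hWG x]
  rfl

lemma quant_le_iff_of_pos (hW : Measurable W) (hWpos : ∀ ω, 0 < W ω)
    (hWG : ∀ x, (ℙ {ω | W ω ≤ x}).toReal = G x) (hGc : Continuous G) {u : ℝ} (hu : u ∈ Ioo 0 1)
    (y : ℝ) : quant G u ≤ y ↔ u ≤ G y := by
  have hG := eq_cdf_map hW hWG
  have hGtop : Tendsto G atTop (𝓝 1) := hG ▸ ProbabilityTheory.tendsto_cdf_atTop _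
  refine quant_le_iff hGc (hG ▸ (ProbabilityTheory.cdf _).mono) ⟨0, fun t ht => not_lt.1 fun h =>
    hu.1.not_ge (ht.trans_eq (apply_eq_zero_of_nonpos hWpos hWG h.le))⟩
    (hGtop.eventually_const_le hu.2).exists y

lemma quant_pos (hW : Measurable W) (hWpos : ∀ ω, 0 < W ω)
    (hWG : ∀ x, (ℙ {ω | W ω ≤ x}).toReal = G x) (hGc : Continuous G) {u : ℝ}
    (hu : u ∈ Ioo 0 1) : 0 < quant G u :=
  not_le.1 fun h => hu.1.not_ge (((quant_le_iff_of_pos hW hWpos hWG hGc hu 0).1 h).trans_eq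
    (apply_eq_zero_of_nonpos hWpos hWG le_rfl))

lemma measure_apply_comp_le (hW : Measurable W)
    (hWpos : ∀ ω, 0 < W ω) (hWG : ∀ x, (ℙ {ω | W ω ≤ x}).toReal = G x) (hGc : Continuous G)
    (hGs : StrictMonoOn G (Ioi 0)) {u : ℝ} (hu : u ∈ Icc 0 1) :
    ℙ {ω | G (W ω) ≤ u} = ENNReal.ofReal u := by
  have hG := eq_cdf_map hW hWG
  rcases hu.2.eq_or_lt with rfl | hu1
  · simp [hG, ProbabilityTheory.cdf_le_one]
  have hGtop : Tendsto G atTop (𝓝 1) := hG ▸ ProbabilityTheory.tendsto_cdf_atTop _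
  obtain ⟨b, hb⟩ := (hGtop.eventually_const_le hu1).exists
  obtain ⟨c, rfl⟩ : u ∈ range G := intermediate_value_univ 0 b hGc
    ⟨(apply_eq_zero_of_nonpos hWpos hWG le_rfl).trans_le hu.1, hb⟩
  have hGm : Monotone G := hG ▸ (ProbabilityTheory.cdf _).mono
  have hset : {ω | G (W ω) ≤ G c} = {ω | W ω ≤ c} := by
    ext ω
    exact ⟨fun h => not_lt.1 fun hlt => (hGs.lt_of_monotone_of_pos hGm (hWpos ω) hlt).not_ge h,
      fun h => hGm h⟩
  rw [hset, ← hWG c, ENNReal.ofReal_toReal (measure_ne_top _ _)]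

lemma ae_apply_comp_mem_Ioo (hW : Measurable W)
    (hWpos : ∀ ω, 0 < W ω) (hWG : ∀ x, (ℙ {ω | W ω ≤ x}).toReal = G x) (hGc : Continuous G)
    (hGs : StrictMonoOn G (Ioi 0)) : ∀ᵐ ω ∂ℙ, G (W ω) ∈ Ioo 0 1 := by
  have hlt : ℙ {ω | G (W ω) < 1} = 1 := by
    refine le_antisymm prob_le_one (ENNReal.le_of_forall_nnreal_lt fun r hr => ?_)
    have hr1 : (r : ℝ) < 1 := by exact_mod_cast ENNReal.coe_lt_one_iff.1 hr
    calc (r : ENNReal) = ℙ {ω | G (W ω) ≤ r} :=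
          ((measure_apply_comp_le hW hWpos hWG hGc hGs ⟨r.2, hr1.le⟩).trans
            ENNReal.ofReal_coe_nnreal).symm
      _ ≤ ℙ {ω | G (W ω) < 1} := measure_mono fun ω h => lt_of_le_of_lt h hr1
  have hGm : Monotone G := eq_cdf_map hW hWG ▸ (ProbabilityTheory.cdf _).mono
  filter_upwards [(mem_ae_iff_prob_eq_one
    (measurableSet_lt (hGc.measurable.comp hW) measurable_const)).2 hlt] with ω hω
  exact ⟨(apply_eq_zero_of_nonpos hWpos hWG le_rfl).symm.trans_lt
    (hGs.lt_of_monotone_of_pos hGm (hWpos ω) (hWpos ω)), hω⟩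

end Distribution

theorem starshaped_iff_multiplier_general {Ω : Type*} [MeasurableSpace Ω]
    (ℙ : Measure Ω) [IsProbabilityMeasure ℙ]
    (X Z : Ω → ℝ) (hX : Measurable X) (hZ : Measurable Z)
    (hXpos : ∀ ω, 0 < X ω) (hZpos : ∀ ω, 0 < Z ω)
    (F H : ℝ → ℝ) (hFc : Continuous F) (hHc : Continuous H)
    (hFmono : StrictMonoOn F (Set.Ioi 0)) (hHmono : StrictMonoOn H (Set.Ioi 0))
    (hXF : ∀ x, (ℙ {ω | X ω ≤ x}).toReal = F x)
    (hZH : ∀ x, (ℙ {ω | Z ω ≤ x}).toReal = H x) :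
    (∀ x ∈ {x : ℝ | 0 < F x ∧ F x < 1}, ∀ l ∈ Set.Icc (0:ℝ) 1,
        l * x ∈ {x : ℝ | 0 < F x ∧ F x < 1} →
        quant H (F (l * x)) ≤ l * quant H (F x))
    ↔ ∃ q : ℝ → ℝ, (∀ x ∈ {x : ℝ | 0 < F x ∧ F x < 1}, 0 < q x) ∧
        MonotoneOn q {x : ℝ | 0 < F x ∧ F x < 1} ∧
        ∀ y : ℝ, ℙ {ω | q (X ω) * X ω ≤ y} = ℙ {ω | Z ω ≤ y} := by
  have hSpos : {x : ℝ | 0 < F x ∧ F x < 1} ⊆ Ioi 0 := fun x hx =>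
    not_le.1 fun h => hx.1.ne' (apply_eq_zero_of_nonpos hXpos hXF h)
  have hXS : ∀ᵐ ω ∂ℙ, F (X ω) ∈ Ioo 0 1 := ae_apply_comp_mem_Ioo hX hXpos hXF hFc hFmono
  have hH := eq_cdf_map hZ hZH
  refine (starshaped_iff_monotoneOn_div (g := fun x => quant H (F x)) hSpos).trans
    ⟨fun hmono => ⟨_, fun z hz => div_pos (quant_pos hZ hZpos hZH hHc hz) (hSpos hz), hmono,
      fun y => ?_⟩, ?_⟩
  · calc ℙ {ω | quant H (F (X ω)) / X ω * X ω ≤ y} = ℙ {ω | F (X ω) ≤ H y} := by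
          refine measure_congr (eventuallyEq_set.2 (hXS.mono fun ω hω => ?_))
          change _ ≤ y ↔ _
          rw [div_mul_cancel₀ _ (hXpos ω).ne']
          exact quant_le_iff_of_pos hZ hZpos hZH hHc hω y
      _ = ENNReal.ofReal (H y) := measure_apply_comp_le hX hXpos hXF hFc hFmono
          ⟨hH ▸ ProbabilityTheory.cdf_nonneg _ _, hH ▸ ProbabilityTheory.cdf_le_one _ _⟩
      _ = ℙ {ω | Z ω ≤ y} := by rw [← hZH, ENNReal.ofReal_toReal (measure_ne_top _ _)]
  · rintro ⟨q, hqpos, hqmono, hq⟩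
    have hT : MonotoneOn (fun z => q z * z) {x : ℝ | 0 < F x ∧ F x < 1} :=
      fun a ha b hb hab => mul_le_mul (hqmono ha hb hab) hab (hSpos ha).le (hqpos b hb).le
    refine hqmono.congr fun z hz => ?_
    have hHT : H (q z * z) = F z :=
      cdf_comp_eq_of_monotoneOn hT hXS hHc hXF (fun y => by rw [hq, hZH]) hz
    rw [← hHT, quant_apply_self hHmono (hH ▸ (ProbabilityTheory.cdf _).mono)
      (mul_pos (hqpos z hz) (hSpos hz)), mul_div_cancel_right₀ _ (hSpos hz).ne']

theorem starshaped_iff_multiplier {Ω : Type*} [MeasurableSpace Ω]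
    (ℙ : Measure Ω) [IsProbabilityMeasure ℙ]
    (X Z : Ω → ℝ) (hX : Measurable X) (hZ : Measurable Z)
    (hXpos : ∀ ω, 0 < X ω) (hZpos : ∀ ω, 0 < Z ω)
    (F H : ℝ → ℝ) (hFc : Continuous F) (hHc : Continuous H)
    (hFmono : StrictMonoOn F (Set.Ioi 0)) (hHmono : StrictMonoOn H (Set.Ioi 0))
    (hF0 : F 0 = 0) (hH0 : H 0 = 0)
    (hXF : ∀ x, (ℙ {ω | X ω ≤ x}).toReal = F x)
    (hZH : ∀ x, (ℙ {ω | Z ω ≤ x}).toReal = H x) :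
    (∀ x ∈ {x : ℝ | 0 < F x ∧ F x < 1}, ∀ l ∈ Set.Icc (0:ℝ) 1,
        l * x ∈ {x : ℝ | 0 < F x ∧ F x < 1} →
        quant H (F (l * x)) ≤ l * quant H (F x))
    ↔ ∃ q : ℝ → ℝ, (∀ x ∈ {x : ℝ | 0 < F x ∧ F x < 1}, 0 < q x) ∧
        MonotoneOn q {x : ℝ | 0 < F x ∧ F x < 1} ∧
        ∀ y : ℝ, ℙ {ω | q (X ω) * X ω ≤ y} = ℙ {ω | Z ω ≤ y} :=
  starshaped_iff_multiplier_general ℙ X Z hX hZ hXpos hZpos F H hFc hHc hFmono hHmono hXF hZH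
end
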